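/- arXiv:2510.17465 — 3 statements merged into one kernel-verified Lean document; each statement's English description precedes it below -/
import Mathlib

section
/- Fix μ, ρ > 0, x̂ ∈ ℝⁿ, ŷ ∈ ℝᵐ. Let X(z) denote the unique minimizer over x ∈ ℝⁿ of L(x,z) := μ f(x) + (ρ/2)‖x − x̂‖² + ⟨ŷ, Ax − z⟩ + (1/2)‖Ax − z‖², and let M(z) := min_{x ∈ ℝⁿ} L(x,z). Then the gradient of M is globally Lipschitz continuous: for all z₁, z₂ ∈ ℝᵐ, ‖∇M(z₁) − ∇M(z₂)‖ ≤ (‖A‖ · ‖(μQ + ρI + AᵀA)⁻¹ Aᵀ‖ + 1) ‖z₁ − z₂‖, where ‖·‖ applied to a matrix denotes the operator norm induced by the Euclidean norm. -/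
open Matrix
open scoped RealInnerProductSpace

set_option maxHeartbeats 1000000 in
theorem stmt6 (n m : ℕ) (Q : Matrix (Fin n) (Fin n) ℝ) (hQ : Q.PosSemidef)
    (q : EuclideanSpace ℝ (Fin n)) (A : Matrix (Fin m) (Fin n) ℝ)
    (xhat : EuclideanSpace ℝ (Fin n)) (yhat : EuclideanSpace ℝ (Fin m))
    (μ ρ : ℝ) (hμ : 0 < μ) (hρ : 0 < ρ)
    (f : EuclideanSpace ℝ (Fin n) → ℝ)
    (hf : ∀ x, f x = (1/2) * ⟪x, Matrix.toEuclideanLin Q x⟫ + ⟪q, x⟫)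
    (L : EuclideanSpace ℝ (Fin n) → EuclideanSpace ℝ (Fin m) → ℝ)
    (hL : ∀ x z, L x z = μ * f x + (ρ/2) * ‖x - xhat‖^2
        + ⟪yhat, Matrix.toEuclideanLin A x - z⟫
        + (1/2) * ‖Matrix.toEuclideanLin A x - z‖^2)
    (X : EuclideanSpace ℝ (Fin m) → EuclideanSpace ℝ (Fin n))
    (hX : ∀ z x, L (X z) z ≤ L x z)
    (M : EuclideanSpace ℝ (Fin m) → ℝ)
    (hM : ∀ z, M z = L (X z) z) :
    ∀ z₁ z₂ : EuclideanSpace ℝ (Fin m),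
      ‖gradient M z₁ - gradient M z₂‖ ≤
        (‖LinearMap.toContinuousLinearMap (Matrix.toEuclideanLin A)‖ *
          ‖LinearMap.toContinuousLinearMap (Matrix.toEuclideanLin
            ((μ • Q + ρ • (1 : Matrix (Fin n) (Fin n) ℝ) + Aᵀ * A)⁻¹ * Aᵀ))‖ + 1)
          * ‖z₁ - z₂‖ := by
  set S : Matrix (Fin n) (Fin n) ℝ := μ • Q + ρ • (1 : Matrix (Fin n) (Fin n) ℝ) + Aᵀ * A with hSdef
  set TA := Matrix.toEuclideanLin A
  set TAt := Matrix.toEuclideanLin Aᵀ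
  set TQ := Matrix.toEuclideanLin Q
  set TS := Matrix.toEuclideanLin S
  set TB := Matrix.toEuclideanLin S⁻¹
  set TBA := Matrix.toEuclideanLin (S⁻¹ * Aᵀ)
  -- positive definiteness of S
  have hS : S.PosDef := by
    have h1 : (μ • Q).PosSemidef := by
      refine Matrix.PosSemidef.of_dotProduct_mulVec_nonneg ?_ (fun x => ?_)
      · simpa [Matrix.IsHermitian] using congrArg (μ • ·) hQ.1
      · rw [smul_mulVec, dotProduct_smul, smul_eq_mul]
        exact mul_nonneg hμ.le (hQ.dotProduct_mulVec_nonneg x)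
    have h2 : (ρ • (1 : Matrix (Fin n) (Fin n) ℝ)).PosDef := by
      refine Matrix.PosDef.of_dotProduct_mulVec_pos ?_ (fun x hx => ?_)
      · simp [Matrix.IsHermitian]
      · rw [smul_mulVec, dotProduct_smul, smul_eq_mul, one_mulVec]
        exact mul_pos hρ (by simpa using Matrix.dotProduct_star_self_pos_iff.mpr hx)
    have h3 : (Aᵀ * A).PosSemidef := by
      simpa [Matrix.conjTranspose_eq_transpose_of_trivial] using
        Matrix.posSemidef_conjTranspose_mul_self A
    exact (Matrix.PosDef.posSemidef_add h1 h2).add_posSemidef h3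
  have hmul1 : ∀ v, Matrix.toEuclideanLin (Aᵀ * A) v = TAt (TA v) := fun v => by
    simp [TAt, TA, Matrix.toEuclideanLin_apply, Matrix.mulVec_mulVec]
  have hmul2 : ∀ v, TBA v = TB (TAt v) := fun v => by
    simp [TBA, TB, TAt, Matrix.toEuclideanLin_apply, Matrix.mulVec_mulVec]
  have hmul3 : ∀ v, TS (TB v) = v := fun v => by
    have h : S * S⁻¹ = 1 := Matrix.mul_nonsing_inv S hS.det_pos.ne'.isUnit
    have : Matrix.toEuclideanLin (S * S⁻¹) v = TS (TB v) := by
      simp [TS, TB, Matrix.toEuclideanLin_apply, Matrix.mulVec_mulVec]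
    rw [← this, h]
    simp [Matrix.toEuclideanLin_apply]
  have adj : ∀ w x, ⟪TAt w, x⟫ = ⟪w, TA x⟫ := fun w x => by
    rw [show TAt = Matrix.toEuclideanLin Aᵀ from rfl,
      ← Matrix.conjTranspose_eq_transpose_of_trivial,
      Matrix.toEuclideanLin_conjTranspose_eq_adjoint, LinearMap.adjoint_inner_left]
  have adj' : ∀ x w, ⟪x, TAt w⟫ = ⟪TA x, w⟫ := fun x w => by
    rw [real_inner_comm, adj, real_inner_comm]
  have sym : ∀ x y, ⟪TS x, y⟫ = ⟪x, TS y⟫ := fun x y => by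
    conv_lhs => rw [show TS = LinearMap.adjoint TS from by
      rw [show TS = Matrix.toEuclideanLin S from rfl, ← Matrix.toEuclideanLin_conjTranspose_eq_adjoint,
        hS.1]]
    exact LinearMap.adjoint_inner_left _ _ _
  have posQ : ∀ d : EuclideanSpace ℝ (Fin n), 0 ≤ ⟪d, TQ d⟫ := fun d => by
    have := hQ.dotProduct_mulVec_nonneg (WithLp.equiv 2 (Fin n → ℝ) d)
    simpa [TQ, EuclideanSpace.inner_eq_star_dotProduct, dotProduct_comm (Q *ᵥ _)] using this
  have hTS : ∀ x, TS x = μ • TQ x + ρ • x + TAt (TA x) := fun x => by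
    rw [show TS x = Matrix.toEuclideanLin (μ • Q + ρ • (1 : Matrix (Fin n) (Fin n) ℝ) + Aᵀ * A) x from rfl]
    simp only [Matrix.toEuclideanLin_apply, Matrix.add_mulVec, Matrix.smul_mulVec,
      Matrix.mulVec_mulVec, Matrix.one_mulVec, WithLp.toLp_add, WithLp.toLp_smul]
    simp [TQ, TA, TAt, Matrix.toEuclideanLin_apply, Matrix.mulVec_mulVec]
  -- strong positivity
  have pos : ∀ d : EuclideanSpace ℝ (Fin n), ρ * ‖d‖^2 ≤ ⟪d, TS d⟫ := fun d => by
    rw [hTS]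
    simp only [inner_add_right, real_inner_smul_right]
    have h1 := posQ d
    have h2 : ⟪d, TAt (TA d)⟫ = ‖TA d‖^2 := by
      rw [adj', real_inner_self_eq_norm_sq]
    have h3 : ⟪d, d⟫ = ‖d‖^2 := real_inner_self_eq_norm_sq d
    nlinarith [sq_nonneg ‖TA d‖, norm_nonneg (TA d)]
  -- the affine minimizer
  set c : EuclideanSpace ℝ (Fin n) := ρ • xhat - μ • q - TAt yhat with hc
  set Xs : EuclideanSpace ℝ (Fin m) → EuclideanSpace ℝ (Fin n) := fun z => TB (TAt z + c) with hXs
  have hb : ∀ z, TS (Xs z) = TAt z + c := fun z => hmul3 _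
  -- quadratic normal form of L
  have quad : ∀ x z, L x z = 1/2 * ⟪x, TS x⟫ - ⟪TAt z + c, x⟫
      + ((ρ/2) * ‖xhat‖^2 - ⟪yhat, z⟫ + 1/2 * ‖z‖^2) := by
    intro x z
    have n1 : ‖x - xhat‖^2 = ⟪x,x⟫ - 2*⟪xhat,x⟫ + ‖xhat‖^2 := by
      rw [← real_inner_self_eq_norm_sq]
      simp only [inner_sub_left, inner_sub_right, real_inner_self_eq_norm_sq]
      rw [real_inner_comm x xhat]; ring
    have n2 : ‖TA x - z‖^2 = ⟪TA x, TA x⟫ - 2*⟪z, TA x⟫ + ‖z‖^2 := by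
      rw [← real_inner_self_eq_norm_sq]
      simp only [inner_sub_left, inner_sub_right, real_inner_self_eq_norm_sq]
      rw [real_inner_comm (TA x) z]; ring
    have e3 : ⟪x, TS x⟫ = μ*⟪x, TQ x⟫ + ρ*⟪x,x⟫ + ⟪TA x, TA x⟫ := by
      rw [hTS]
      simp only [inner_add_right, real_inner_smul_right]
      rw [adj']
    have e4 : ⟪TAt z + c, x⟫ = ⟪z, TA x⟫ + ρ*⟪xhat,x⟫ - μ*⟪q,x⟫ - ⟪yhat, TA x⟫ := by
      simp only [hc, inner_add_left, inner_sub_left, real_inner_smul_left, adj]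
      ring
    have e5 : ⟪yhat, TA x - z⟫ = ⟪yhat, TA x⟫ - ⟪yhat, z⟫ := inner_sub_right _ _ _
    rw [hL, hf, n1, n2, e3, e4, e5]
    ring
  -- completing the square
  have key2 : ∀ z x, L x z = L (Xs z) z + 1/2 * ⟪x - Xs z, TS (x - Xs z)⟫ := by
    intro z x
    have hsx : ⟪Xs z, TS x⟫ = ⟪TAt z + c, x⟫ := by rw [← sym, hb]
    have hsx2 : ⟪x, TS (Xs z)⟫ = ⟪TAt z + c, x⟫ := by
      rw [hb]; exact real_inner_comm _ _
    have hsx3 : ⟪Xs z, TS (Xs z)⟫ = ⟪TAt z + c, Xs z⟫ := by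
      rw [hb]; exact real_inner_comm _ _
    have expand : ⟪x - Xs z, TS (x - Xs z)⟫
        = ⟪x, TS x⟫ - ⟪x, TS (Xs z)⟫ - ⟪Xs z, TS x⟫ + ⟪Xs z, TS (Xs z)⟫ := by
      simp only [map_sub, inner_sub_left, inner_sub_right]
      ring
    rw [quad x z, quad (Xs z) z, expand, hsx, hsx2, hsx3]
    ring
  -- the minimizer is Xs
  have hXX : ∀ z, X z = Xs z := by
    intro z
    by_contra hne
    have hd : X z - Xs z ≠ 0 := sub_ne_zero_of_ne hne
    have h1 := hX z (Xs z)
    have h2 := key2 z (X z)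
    have h3 := pos (X z - Xs z)
    have h4 : 0 < ρ * ‖X z - Xs z‖^2 := by
      have := norm_pos_iff.mpr hd
      positivity
    linarith
  -- the shift identity in z
  have shift : ∀ (x : EuclideanSpace ℝ (Fin n)) z w,
      L x w = L x z + ⟪z - TA x - yhat, w - z⟫ + 1/2 * ‖w - z‖^2 := by
    intro x z w
    have n3 : ‖w - z‖^2 = ‖w‖^2 - 2*⟪z,w⟫ + ‖z‖^2 := by
      rw [← real_inner_self_eq_norm_sq]
      simp only [inner_sub_left, inner_sub_right, real_inner_self_eq_norm_sq]
      rw [real_inner_comm w z]; ring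
    have e6 : ⟪TAt w, x⟫ = ⟪w, TA x⟫ := adj _ _
    have e7 : ⟪TAt z, x⟫ = ⟪z, TA x⟫ := adj _ _
    have e8 : ⟪z - TA x - yhat, w - z⟫
        = ⟪z,w⟫ - ‖z‖^2 - ⟪w, TA x⟫ + ⟪z, TA x⟫ - ⟪yhat,w⟫ + ⟪yhat,z⟫ := by
      simp only [inner_sub_left, inner_sub_right, real_inner_self_eq_norm_sq]
      rw [real_inner_comm (TA x) w, real_inner_comm (TA x) z]
      ring
    rw [quad x z, quad x w, e8, n3]
    simp only [inner_add_left, e6, e7]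
    ring
  -- gradient of M
  set K := ‖LinearMap.toContinuousLinearMap TA‖ * ‖LinearMap.toContinuousLinearMap TBA‖ with hK
  have hK0 : 0 ≤ K := mul_nonneg (norm_nonneg _) (norm_nonneg _)
  have hXsdiff : ∀ z w, Xs z - Xs w = TBA (z - w) := by
    intro z w
    rw [hmul2, map_sub]
    simp only [hXs]
    rw [← map_sub]
    congr 1
    abel
  have hTBA_bound : ∀ v : EuclideanSpace ℝ (Fin m), ‖TA (TBA v)‖ ≤ K * ‖v‖ := by
    intro v
    calc ‖TA (TBA v)‖ ≤ ‖LinearMap.toContinuousLinearMap TA‖ * ‖TBA v‖ :=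
          (LinearMap.toContinuousLinearMap TA).le_opNorm _
      _ ≤ ‖LinearMap.toContinuousLinearMap TA‖ * (‖LinearMap.toContinuousLinearMap TBA‖ * ‖v‖) := by
          exact mul_le_mul_of_nonneg_left
            ((LinearMap.toContinuousLinearMap TBA).le_opNorm v) (norm_nonneg _)
      _ = K * ‖v‖ := by rw [hK]; ring
  set g : EuclideanSpace ℝ (Fin m) → EuclideanSpace ℝ (Fin m) :=
    fun z => z - TA (Xs z) - yhat with hg
  have hgrad : ∀ z, HasGradientAt M (g z) z := by
    intro z
    rw [hasGradientAt_iff_isLittleO]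
    have bound : ∀ w, |M w - M z - ⟪g z, w - z⟫| ≤ (K + 1) * ‖w - z‖^2 := by
      intro w
      have hMw : M w = L (Xs w) w := by rw [hM, hXX]
      have hMz : M z = L (Xs z) z := by rw [hM, hXX]
      have hup : M w ≤ M z + ⟪g z, w - z⟫ + 1/2 * ‖w - z‖^2 := by
        have h1 : L (X w) w ≤ L (Xs z) w := hX w (Xs z)
        have h2 := shift (Xs z) z w
        rw [hM, hMz]
        rw [h2] at h1
        simpa [hg] using h1
      have hlow : M z + ⟪g z, w - z⟫ - K * ‖w - z‖^2 + 1/2 * ‖w - z‖^2 ≤ M w := by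
        have h1 : L (X z) z ≤ L (Xs w) z := hX z (Xs w)
        rw [← hM] at h1
        have h2 := shift (Xs w) z w
        have h3 : ⟪z - TA (Xs w) - yhat, w - z⟫
            = ⟪g z, w - z⟫ + ⟪TA (Xs z - Xs w), w - z⟫ := by
          rw [hg]
          simp only [map_sub, inner_sub_left]
          ring
        have h4 : ⟪TA (Xs z - Xs w), w - z⟫ ≥ -(K * ‖w - z‖^2) := by
          have := abs_real_inner_le_norm (TA (Xs z - Xs w)) (w - z)
          have hb2 : ‖TA (Xs z - Xs w)‖ ≤ K * ‖z - w‖ := by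
            rw [hXsdiff]; exact hTBA_bound _
          have hzw : ‖z - w‖ = ‖w - z‖ := norm_sub_rev _ _
          have h5 : ‖TA (Xs z - Xs w)‖ * ‖w - z‖ ≤ K * ‖w - z‖^2 := by
            rw [hzw] at hb2
            calc ‖TA (Xs z - Xs w)‖ * ‖w - z‖ ≤ (K * ‖w - z‖) * ‖w - z‖ := by
                  gcongr
              _ = K * ‖w - z‖^2 := by ring
          nlinarith [neg_abs_le (⟪TA (Xs z - Xs w), w - z⟫ : ℝ)]
        rw [hMw, h2, h3]
        have : L (Xs w) z ≥ M z := h1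
        linarith
      rw [abs_le]
      constructor
      · nlinarith [sq_nonneg ‖w - z‖]
      · nlinarith [sq_nonneg ‖w - z‖]
    rw [Asymptotics.isLittleO_iff]
    intro ε hε
    have hlo : (fun w => ‖w - z‖^2 : EuclideanSpace ℝ (Fin m) → ℝ) =o[nhds z]
        fun w => w - z := by
      simpa using Asymptotics.isLittleO_pow_sub_sub z (m := 2) one_lt_two
    have hKε : 0 < ε / (K + 1) := by positivity
    filter_upwards [Asymptotics.isLittleO_iff.mp hlo hKε] with w hw
    calc ‖M w - M z - ⟪g z, w - z⟫‖ ≤ (K + 1) * ‖w - z‖^2 := by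
          rw [Real.norm_eq_abs]; exact bound w
      _ = (K + 1) * ‖(‖w - z‖^2)‖ := by rw [Real.norm_eq_abs, abs_of_nonneg (sq_nonneg _)]
      _ ≤ (K + 1) * (ε / (K + 1) * ‖w - z‖) := by
          exact mul_le_mul_of_nonneg_left hw (by positivity)
      _ = ε * ‖w - z‖ := by field_simp
  -- conclusion
  intro z₁ z₂
  rw [(hgrad z₁).gradient, (hgrad z₂).gradient]
  have hdiff : g z₁ - g z₂ = (z₁ - z₂) - TA (TBA (z₁ - z₂)) := by
    rw [hg]
    simp only
    rw [← hXsdiff, map_sub]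
    abel
  rw [hdiff]
  calc ‖(z₁ - z₂) - TA (TBA (z₁ - z₂))‖ ≤ ‖z₁ - z₂‖ + ‖TA (TBA (z₁ - z₂))‖ :=
        norm_sub_le _ _
    _ ≤ ‖z₁ - z₂‖ + K * ‖z₁ - z₂‖ := by gcongr; exact hTBA_bound _
    _ = (K + 1) * ‖z₁ - z₂‖ := by ring
end

section
/- Let C ⊆ ℝᵐ be a nonempty closed convex set and suppose A has full row rank (Aᵀ is injective). Let (x_k), (z_k), (y_k), (v_k), (d_k), (ε_k), (μ_k) be sequences with z_k ∈ C, ε_k > 0, ε_k → 0, μ_k > 0, μ_k → μ̄ for some μ̄ > 0, d_k → 0, and suppose for every k: ‖μ_k ∇f(x_k) + Aᵀ y_k + d_k‖ ≤ ε_k; ⟨v_k, c − z_k⟩ ≤ 0 for all c ∈ C; and ‖y_k − v_k‖ ≤ ε_k. If x_k → x̄ and z_k → z̄ with A x̄ = z̄ (so x̄ is feasible), then x̄ is a KKT point of the problem of minimizing f over {x : Ax ∈ C}: there exists ȳ ∈ ℝᵐ with ∇f(x̄) + Aᵀ ȳ = 0 and ⟨ȳ, c − A x̄⟩ ≤ 0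 for all c ∈ C. -/
/-!
Full row rank makes `Aᵀ` a closed embedding. Stationarity forces `Aᵀ y_k → -μ̄ ∇f(x̄)`, so the
multipliers `y_k` converge to some `ȳ` with `Aᵀ ȳ = -μ̄ ∇f(x̄)`, and so do the normal directions
`v_k`. The normal-cone inequality passes to the limit, and `ȳ / μ̄` is a KKT multiplier.
-/

open Matrix Filter
open scoped RealInnerProductSpace Topology

theorem Topology.IsClosedEmbedding.exists_tendsto_of_tendsto_comp {X Y ι : Type*}
    [TopologicalSpace X] [TopologicalSpace Y] {g : X → Y} (hg : IsClosedEmbedding g)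
    {l : Filter ι} [l.NeBot] {y : ι → X} {w : Y} (h : Tendsto (g ∘ y) l (𝓝 w)) :
    ∃ ybar, g ybar = w ∧ Tendsto y l (𝓝 ybar) := by
  obtain ⟨ybar, rfl⟩ : w ∈ Set.range g :=
    hg.isClosed_range.mem_of_tendsto h (Eventually.of_forall fun k => ⟨y k, rfl⟩)
  exact ⟨ybar, rfl, hg.tendsto_nhds_iff.2 h⟩

theorem forall_inner_sub_nonpos_of_tendsto {E ι : Type*} [NormedAddCommGroup E]
    [InnerProductSpace ℝ E] {l : Filter ι} [l.NeBot] {C : Set E} {v z : ι → E} {vbar zbar : E}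
    (hv : Tendsto v l (𝓝 vbar)) (hz : Tendsto z l (𝓝 zbar))
    (hnormal : ∀ k, ∀ c ∈ C, ⟪v k, c - z k⟫ ≤ 0) :
    ∀ c ∈ C, ⟪vbar, c - zbar⟫ ≤ 0 := fun c hc =>
  le_of_tendsto (hv.inner (tendsto_const_nhds.sub hz)) (Eventually.of_forall fun k => hnormal k c hc)

theorem stmt15_general (n m : ℕ) (Q : Matrix (Fin n) (Fin n) ℝ)
    (q : EuclideanSpace ℝ (Fin n)) (A : Matrix (Fin m) (Fin n) ℝ)
    (C : Set (EuclideanSpace ℝ (Fin m)))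
    (hA : Function.Injective (Matrix.toEuclideanLin Aᵀ))
    (x d : ℕ → EuclideanSpace ℝ (Fin n)) (z y v : ℕ → EuclideanSpace ℝ (Fin m))
    (ε μs : ℕ → ℝ) (μbar : ℝ)
    (hεlim : Tendsto ε atTop (𝓝 0))
    (hμlim : Tendsto μs atTop (𝓝 μbar)) (hμbar : 0 < μbar)
    (hdlim : Tendsto d atTop (𝓝 0))
    (hstat : ∀ k, ‖μs k • (Matrix.toEuclideanLin Q (x k) + q)
        + Matrix.toEuclideanLin Aᵀ (y k) + d k‖ ≤ ε k)
    (hnormal : ∀ k, ∀ c ∈ C, ⟪v k, c - z k⟫ ≤ 0)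
    (hyv : ∀ k, ‖y k - v k‖ ≤ ε k)
    (xbar : EuclideanSpace ℝ (Fin n)) (zbar : EuclideanSpace ℝ (Fin m))
    (hxlim : Tendsto x atTop (𝓝 xbar)) (hzlim : Tendsto z atTop (𝓝 zbar))
    (hfeas : Matrix.toEuclideanLin A xbar = zbar) :
    ∃ ybar : EuclideanSpace ℝ (Fin m),
      Matrix.toEuclideanLin Q xbar + q + Matrix.toEuclideanLin Aᵀ ybar = 0 ∧
      ∀ c ∈ C, ⟪ybar, c - Matrix.toEuclideanLin A xbar⟫ ≤ 0 := by
  set S := Matrix.toEuclideanLin Q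
  set T := Matrix.toEuclideanLin Aᵀ
  have hgrad : Tendsto (fun k => S (x k) + q) atTop (𝓝 (S xbar + q)) :=
    ((S.continuous_of_finiteDimensional.tendsto _).comp hxlim).add_const q
  have hres : Tendsto (fun k => μs k • (S (x k) + q) + T (y k) + d k) atTop (𝓝 0) :=
    squeeze_zero_norm hstat hεlim
  have hTy : Tendsto (T ∘ y) atTop (𝓝 (-(μbar • (S xbar + q)))) := by
    convert (hres.sub (hμlim.smul hgrad)).sub hdlim using 2
    · simp only [Function.comp_apply]; abel
    · simp
  obtain ⟨ybar, hTybar, hylim⟩ :=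
    (T.isClosedEmbedding_of_injective (LinearMap.ker_eq_bot.2 hA)).exists_tendsto_of_tendsto_comp
      hTy
  have hvlim : Tendsto v atTop (𝓝 ybar) := by
    simpa using hylim.sub (squeeze_zero_norm hyv hεlim)
  refine ⟨μbar⁻¹ • ybar, ?_, fun c hc => ?_⟩
  · rw [map_smul, hTybar, smul_neg, smul_smul, inv_mul_cancel₀ hμbar.ne', one_smul,
      add_neg_cancel]
  · rw [hfeas, real_inner_smul_left]
    exact mul_nonpos_of_nonneg_of_nonpos (inv_nonneg.2 hμbar.le)
      (forall_inner_sub_nonpos_of_tendsto hvlim hzlim hnormal c hc)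

theorem stmt15 (n m : ℕ) (Q : Matrix (Fin n) (Fin n) ℝ) (hQ : Q.PosSemidef)
    (q : EuclideanSpace ℝ (Fin n)) (A : Matrix (Fin m) (Fin n) ℝ)
    (C : Set (EuclideanSpace ℝ (Fin m))) (hCne : C.Nonempty) (hCcl : IsClosed C)
    (hCconv : Convex ℝ C)
    (hA : Function.Injective (Matrix.toEuclideanLin Aᵀ))
    (f : EuclideanSpace ℝ (Fin n) → ℝ)
    (hf : ∀ x, f x = (1/2) * ⟪x, Matrix.toEuclideanLin Q x⟫ + ⟪q, x⟫)
    (x d : ℕ → EuclideanSpace ℝ (Fin n)) (z y v : ℕ → EuclideanSpace ℝ (Fin m))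
    (ε μs : ℕ → ℝ) (μbar : ℝ)
    (hz : ∀ k, z k ∈ C)
    (hε : ∀ k, 0 < ε k) (hεlim : Tendsto ε atTop (𝓝 0))
    (hμs : ∀ k, 0 < μs k) (hμlim : Tendsto μs atTop (𝓝 μbar)) (hμbar : 0 < μbar)
    (hdlim : Tendsto d atTop (𝓝 0))
    (hstat : ∀ k, ‖μs k • (Matrix.toEuclideanLin Q (x k) + q)
        + Matrix.toEuclideanLin Aᵀ (y k) + d k‖ ≤ ε k)
    (hnormal : ∀ k, ∀ c ∈ C, ⟪v k, c - z k⟫ ≤ 0)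
    (hyv : ∀ k, ‖y k - v k‖ ≤ ε k)
    (xbar : EuclideanSpace ℝ (Fin n)) (zbar : EuclideanSpace ℝ (Fin m))
    (hxlim : Tendsto x atTop (𝓝 xbar)) (hzlim : Tendsto z atTop (𝓝 zbar))
    (hfeas : Matrix.toEuclideanLin A xbar = zbar) :
    ∃ ybar : EuclideanSpace ℝ (Fin m),
      Matrix.toEuclideanLin Q xbar + q + Matrix.toEuclideanLin Aᵀ ybar = 0 ∧
      ∀ c ∈ C, ⟪ybar, c - Matrix.toEuclideanLin A xbar⟫ ≤ 0 :=
  stmt15_general n m Q q A C hA x d z y v ε μs μbar hεlim hμlim hμbar hdlim hstat hnormal hyv xbar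
    zbar hxlim hzlim hfeas
end

section
/- Fix μ, ρ > 0, let A be a real m×n matrix and A_eq a real p×n matrix with full row rank (rank p). Then the (n+m+p)×(n+m+p) block matrix [[μQ + ρI, Aᵀ, A_eqᵀ], [A, −I, 0], [A_eq, 0, 0]] is nonsingular: for every right-hand side the block linear system with this matrix has a unique solution. -/
open Matrix

theorem stmt17 (n m p : ℕ) (Q : Matrix (Fin n) (Fin n) ℝ) (hQ : Q.PosSemidef)
    (A : Matrix (Fin m) (Fin n) ℝ) (Aeq : Matrix (Fin p) (Fin n) ℝ)
    (hAeq : Aeq.rank = p)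
    (μ ρ : ℝ) (hμ : 0 < μ) (hρ : 0 < ρ)
    (K : Matrix ((Fin n ⊕ Fin m) ⊕ Fin p) ((Fin n ⊕ Fin m) ⊕ Fin p) ℝ)
    (hK : K = Matrix.fromBlocks
      (Matrix.fromBlocks (μ • Q + ρ • (1 : Matrix (Fin n) (Fin n) ℝ)) Aᵀ
        A (-(1 : Matrix (Fin m) (Fin m) ℝ)))
      (Matrix.fromRows Aeqᵀ (0 : Matrix (Fin m) (Fin p) ℝ))
      (Matrix.fromCols Aeq (0 : Matrix (Fin p) (Fin m) ℝ))
      (0 : Matrix (Fin p) (Fin p) ℝ)) :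
    IsUnit K ∧ ∀ b : ((Fin n ⊕ Fin m) ⊕ Fin p) → ℝ, ∃! w, K.mulVec w = b := by
  -- injectivity of Aeqᵀ.mulVec
  have hAT : Function.Injective (Aeqᵀ.mulVec) := by
    rw [← Matrix.coe_mulVecLin, ← LinearMap.ker_eq_bot]
    have hrank : Aeqᵀ.rank = p := by rw [Matrix.rank_transpose, hAeq]
    have hsum := LinearMap.finrank_range_add_finrank_ker (Aeqᵀ.mulVecLin)
    rw [Module.finrank_fintype_fun_eq_card, Fintype.card_fin] at hsum
    have : Module.finrank ℝ (LinearMap.ker Aeqᵀ.mulVecLin) = 0 := by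
      have : (Aeqᵀ.rank : ℕ) = Module.finrank ℝ (LinearMap.range Aeqᵀ.mulVecLin) := rfl
      omega
    exact Submodule.finrank_eq_zero.mp this
  -- K.mulVec is injective
  have hker : ∀ w, K.mulVec w = 0 → w = 0 := by
    intro w hw
    set x : Fin n → ℝ := fun i => w (Sum.inl (Sum.inl i)) with hx
    set y : Fin m → ℝ := fun i => w (Sum.inl (Sum.inr i)) with hy
    set z : Fin p → ℝ := fun i => w (Sum.inr i) with hz
    have hwelim : w = Sum.elim (Sum.elim x y) z := by
      funext i; rcases i with (i | i) | i <;> rfl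
    rw [hwelim, hK] at hw
    rw [Matrix.fromBlocks_mulVec] at hw
    simp only [Sum.elim_comp_inl, Sum.elim_comp_inr] at hw
    rw [Matrix.fromBlocks_mulVec, Matrix.fromCols_mulVec_sumElim] at hw
    have h3 : Aeq.mulVec x = 0 := by
      have := congrFun hw
      have h := funext fun i => this (Sum.inr i)
      funext i; simpa [Matrix.fromRows_mulVec] using congrFun h i
    have h12 : Sum.elim ((μ • Q + ρ • (1 : Matrix (Fin n) (Fin n) ℝ)).mulVec x + Aᵀ.mulVec y)
        (A.mulVec x + (-(1 : Matrix (Fin m) (Fin m) ℝ)).mulVec y)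
        + (Matrix.fromRows Aeqᵀ (0 : Matrix (Fin m) (Fin p) ℝ)).mulVec z = 0 := by
      have := congrFun hw
      funext i; exact this (Sum.inl i)
    rw [Matrix.fromRows_mulVec] at h12
    have h1 : (μ • Q + ρ • (1 : Matrix (Fin n) (Fin n) ℝ)).mulVec x + Aᵀ.mulVec y
        + Aeqᵀ.mulVec z = 0 := by
      funext i
      have := congrFun h12 (Sum.inl i)
      simpa using this
    have h2 : A.mulVec x - y = 0 := by
      funext i
      have := congrFun h12 (Sum.inr i)
      simpa [Matrix.neg_mulVec, Matrix.one_mulVec, sub_eq_add_neg] using this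
    have hyAx : y = A.mulVec x := by
      have := sub_eq_zero.mp h2; exact this.symm
    -- dot with x
    have hdot : x ⬝ᵥ ((μ • Q + ρ • (1 : Matrix (Fin n) (Fin n) ℝ)).mulVec x)
        + x ⬝ᵥ (Aᵀ.mulVec y) + x ⬝ᵥ (Aeqᵀ.mulVec z) = 0 := by
      have := congrArg (fun v => x ⬝ᵥ v) h1
      simpa [dotProduct_add] using this
    have hxAy : x ⬝ᵥ (Aᵀ.mulVec y) = y ⬝ᵥ y := by
      rw [Matrix.dotProduct_mulVec, Matrix.vecMul_transpose, hyAx]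
    have hxAeqz : x ⬝ᵥ (Aeqᵀ.mulVec z) = 0 := by
      rw [Matrix.dotProduct_mulVec, Matrix.vecMul_transpose, h3, zero_dotProduct]
    have hexpand : x ⬝ᵥ ((μ • Q + ρ • (1 : Matrix (Fin n) (Fin n) ℝ)).mulVec x)
        = μ * (x ⬝ᵥ Q.mulVec x) + ρ * (x ⬝ᵥ x) := by
      rw [Matrix.add_mulVec, dotProduct_add, Matrix.smul_mulVec,
        Matrix.smul_mulVec, Matrix.one_mulVec, dotProduct_smul,
        dotProduct_smul]
      rfl
    rw [hexpand, hxAy, hxAeqz, add_zero] at hdot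
    -- all terms nonneg
    have hQx : 0 ≤ x ⬝ᵥ Q.mulVec x := by
      have := hQ.dotProduct_mulVec_nonneg x
      simpa using this
    have hxx : 0 ≤ x ⬝ᵥ x := Finset.sum_nonneg fun i _ => mul_self_nonneg (x i)
    have hyy : 0 ≤ y ⬝ᵥ y := Finset.sum_nonneg fun i _ => mul_self_nonneg (y i)
    have hx0 : x = 0 := by
      have hρx : ρ * (x ⬝ᵥ x) = 0 := by nlinarith [mul_nonneg hμ.le hQx]
      have : x ⬝ᵥ x = 0 := by
        rcases mul_eq_zero.mp hρx with h | h
        · exact absurd h hρ.ne'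
        · exact h
      exact dotProduct_self_eq_zero.mp this
    have hy0 : y = 0 := by
      have : y ⬝ᵥ y = 0 := by nlinarith [mul_nonneg hμ.le hQx, mul_nonneg hρ.le hxx]
      exact dotProduct_self_eq_zero.mp this
    have hz0 : z = 0 := by
      apply hAT
      rw [Matrix.mulVec_zero]
      have := h1
      rw [hx0, hy0, Matrix.mulVec_zero, Matrix.mulVec_zero, zero_add, zero_add] at this
      exact this
    rw [hwelim, hx0, hy0, hz0]
    funext i; rcases i with (i | i) | i <;> rfl
  have hinj : Function.Injective K.mulVec := by
    intro a b hab
    have : K.mulVec (a - b) = 0 := by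
      rw [Matrix.mulVec_sub, hab, sub_self]
    have := hker _ this
    exact sub_eq_zero.mp this
  have hunit : IsUnit K := Matrix.mulVec_injective_iff_isUnit.mp hinj
  refine ⟨hunit, fun b => ?_⟩
  have hsurj : Function.Surjective K.mulVec := Matrix.mulVec_surjective_iff_isUnit.mpr hunit
  obtain ⟨w, hw⟩ := hsurj b
  exact ⟨w, hw, fun w' hw' => hinj (hw'.trans hw.symm)⟩
end
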